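/- arXiv:1706.09795 — 3 statements merged into one kernel-verified Lean document; each statement's English description precedes it below -/
import Mathlib

section
/- Let n ≥ 1, m ≥ 1, let p, q ∈ (1, ∞) be conjugate exponents, let A be an invertible n×n real matrix, γ ≥ 0, let ω_1, …, ω_m ∈ ℝⁿ, let x, Δx ∈ ℝⁿ with ‖A⁻¹ Δx‖_p ≤ γ, and set D = 2m. Define Δφ ∈ ℝ^D as the vector whose j-th pair of components is √(2/D)(cos(ω_j ⋅ (x+Δx)) − cos(ω_j ⋅ x)) and √(2/D)(sin(ω_j ⋅ (x+Δx)) − sin(ω_j ⋅ x)). Define α_j = min(2, (γ ‖A^⊤ ω_j‖_q)²/2). Then ‖Δφ‖₂ ≤ √((4/D) Σ_{j=1}^m α_j). -/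
open Real Matrix Finset

/-!
The `j`-th pair of components of `Δφ` is `√(2/D)` times the chord between two points of the unit
circle at angle `θ_j = ω_j ⬝ Δx` apart; its squared length `2 - 2 cos θ_j` is at most
`min 4 θ_j²`. Writing `ω_j ⬝ Δx = (Aᵀ ω_j) ⬝ (A⁻¹ Δx)`, Hölder's inequality gives
`|θ_j| ≤ γ ‖Aᵀ ω_j‖_q`, and summing over `j` yields the bound.
-/

theorem cos_sub_sq_add_sin_sub_sq (b θ : ℝ) :
    (cos (b + θ) - cos b) ^ 2 + (sin (b + θ) - sin b) ^ 2 = 2 - 2 * cos θ := by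
  rw [cos_add, sin_add]
  linear_combination ((cos θ - 1) ^ 2 + sin θ ^ 2) * sin_sq_add_cos_sq b + sin_sq_add_cos_sq θ

theorem cos_sub_sq_add_sin_sub_sq_le_min (b θ : ℝ) :
    (cos (b + θ) - cos b) ^ 2 + (sin (b + θ) - sin b) ^ 2 ≤ min 4 (θ ^ 2) := by
  rw [cos_sub_sq_add_sin_sub_sq, le_min_iff]
  constructor
  · linarith [neg_one_le_cos θ]
  · linarith [one_sub_sq_div_two_le_cos (x := θ)]

theorem min_four_sq_le_two_mul_min {θ c : ℝ} (hθ : |θ| ≤ c) :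
    min 4 (θ ^ 2) ≤ 2 * min 2 (c ^ 2 / 2) := by
  rw [mul_min_of_nonneg _ _ zero_le_two]
  refine min_le_min (by norm_num) ?_
  rw [mul_div_cancel₀ _ two_ne_zero]
  exact sq_le_sq' (neg_le_of_abs_le hθ) (le_of_abs_le hθ)

theorem dotProduct_eq_transpose_mulVec_dotProduct_inv_mulVec {ι R : Type*} [Fintype ι]
    [DecidableEq ι] [CommRing R] (A : Matrix ι ι R) (hA : IsUnit A.det) (w v : ι → R) :
    w ⬝ᵥ v = (Aᵀ *ᵥ w) ⬝ᵥ (A⁻¹ *ᵥ v) := by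
  rw [mulVec_transpose, dotProduct_mulVec, vecMul_vecMul, mul_nonsing_inv A hA, vecMul_one]

theorem abs_dotProduct_le_Lp_mul_Lq {ι : Type*} [Fintype ι] (u v : ι → ℝ) {p q : ℝ}
    (hpq : p.HolderConjugate q) :
    |u ⬝ᵥ v| ≤ (∑ k, |u k| ^ p) ^ (1 / p) * (∑ k, |v k| ^ q) ^ (1 / q) := by
  refine (abs_sum_le_sum_abs _ _).trans ?_
  simpa only [abs_mul, abs_abs] using
    inner_le_Lp_mul_Lq univ (fun k => |u k|) (fun k => |v k|) hpq

theorem stmt_4_general (n m : ℕ)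
    (p q : ℝ) (hq : 1 < q) (hpq : 1 / p + 1 / q = 1)
    (A : Matrix (Fin n) (Fin n) ℝ) (hA : IsUnit A.det)
    (γ : ℝ)
    (ω : Fin m → Fin n → ℝ) (x Δx : Fin n → ℝ)
    (h : (∑ k, |(A⁻¹ *ᵥ Δx) k| ^ p) ^ (1 / p) ≤ γ)
    (D : ℕ)
    (Δφ : Fin m × Fin 2 → ℝ)
    (hΔφ : ∀ j : Fin m,
      Δφ (j, 0) = Real.sqrt (2 / D) *
        (Real.cos (∑ k, ω j k * (x k + Δx k)) - Real.cos (∑ k, ω j k * x k)) ∧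
      Δφ (j, 1) = Real.sqrt (2 / D) *
        (Real.sin (∑ k, ω j k * (x k + Δx k)) - Real.sin (∑ k, ω j k * x k)))
    (α : Fin m → ℝ)
    (hα : ∀ j, α j = min 2 ((γ * (∑ k, |(Aᵀ *ᵥ ω j) k| ^ q) ^ (1 / q)) ^ 2 / 2)) :
    Real.sqrt (∑ i : Fin m × Fin 2, (Δφ i) ^ 2)
      ≤ Real.sqrt ((4 / D) * ∑ j : Fin m, α j) := by
  have hqp : q.HolderConjugate p :=
    holderConjugate_iff.mpr ⟨hq, by simpa only [one_div, add_comm] using hpq⟩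
  have hscale : √(2 / D) ^ 2 = 2 / D := sq_sqrt (by positivity)
  refine sqrt_le_sqrt ?_
  rw [Fintype.sum_prod_type, mul_sum]
  refine sum_le_sum fun j _ => ?_
  obtain ⟨h0, h1⟩ := hΔφ j
  have hshift : ∑ k, ω j k * (x k + Δx k) = ω j ⬝ᵥ x + ω j ⬝ᵥ Δx := dotProduct_add _ _ _
  have hbase : ∑ k, ω j k * x k = ω j ⬝ᵥ x := rfl
  have hphase : |ω j ⬝ᵥ Δx| ≤ γ * (∑ k, |(Aᵀ *ᵥ ω j) k| ^ q) ^ (1 / q) := by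
    rw [dotProduct_eq_transpose_mulVec_dotProduct_inv_mulVec A hA, mul_comm γ]
    exact (abs_dotProduct_le_Lp_mul_Lq _ _ hqp).trans (by gcongr)
  calc ∑ i : Fin 2, Δφ (j, i) ^ 2
      = 2 / D * ((cos (ω j ⬝ᵥ x + ω j ⬝ᵥ Δx) - cos (ω j ⬝ᵥ x)) ^ 2
          + (sin (ω j ⬝ᵥ x + ω j ⬝ᵥ Δx) - sin (ω j ⬝ᵥ x)) ^ 2) := by
        rw [Fin.sum_univ_two, h0, h1, hshift, hbase, mul_pow, mul_pow, hscale, mul_add]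
    _ ≤ 2 / D * (2 * α j) := by
        rw [hα j]
        gcongr
        exact (cos_sub_sq_add_sin_sub_sq_le_min _ _).trans (min_four_sq_le_two_mul_min hphase)
    _ = 4 / D * α j := by ring

/-- Case `p̄ = 2` of Proposition 1: the Euclidean norm of the
random-Fourier-feature uncertainty is bounded by `√((4/D) Σ_j α_j)`. -/
theorem stmt_4 (n m : ℕ) (hn : 1 ≤ n) (hm : 1 ≤ m)
    (p q : ℝ) (hp : 1 < p) (hq : 1 < q) (hpq : 1 / p + 1 / q = 1)
    (A : Matrix (Fin n) (Fin n) ℝ) (hA : IsUnit A.det)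
    (γ : ℝ) (hγ : 0 ≤ γ)
    (ω : Fin m → Fin n → ℝ) (x Δx : Fin n → ℝ)
    (h : (∑ k, |(A⁻¹ *ᵥ Δx) k| ^ p) ^ (1 / p) ≤ γ)
    (D : ℕ) (hD : D = 2 * m)
    (Δφ : Fin m × Fin 2 → ℝ)
    (hΔφ : ∀ j : Fin m,
      Δφ (j, 0) = Real.sqrt (2 / D) *
        (Real.cos (∑ k, ω j k * (x k + Δx k)) - Real.cos (∑ k, ω j k * x k)) ∧
      Δφ (j, 1) = Real.sqrt (2 / D) *
        (Real.sin (∑ k, ω j k * (x k + Δx k)) - Real.sin (∑ k, ω j k * x k)))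
    (α : Fin m → ℝ)
    (hα : ∀ j, α j = min 2 ((γ * (∑ k, |(Aᵀ *ᵥ ω j) k| ^ q) ^ (1 / q)) ^ 2 / 2)) :
    Real.sqrt (∑ i : Fin m × Fin 2, (Δφ i) ^ 2)
      ≤ Real.sqrt ((4 / D) * ∑ j : Fin m, α j) :=
  stmt_4_general n m p q hq hpq A hA γ ω x Δx h D Δφ hΔφ α hα
end

section
/- Let n ≥ 1, m ≥ 1, let p, q ∈ (1, ∞) be conjugate exponents, let A be an invertible n×n real matrix, γ ≥ 0, let ω_1, …, ω_m ∈ ℝⁿ, let x, Δx ∈ ℝⁿ with ‖A⁻¹ Δx‖_p ≤ γ, and set D = 2m. Define w ∈ ℝ^D as the vector whose j-th pair of components is √(2/D)(cos(ω_j ⋅ Δx) − 1) and √(2/D) sin(ω_j ⋅ Δx). Define α_j = min(2, (γ ‖A^⊤ ω_j‖_q)²/2) and β_j = min(1, γ ‖A^⊤ ω_j‖_q). Then the ℓ¹ norm of w satisfies ‖w‖₁ ≤ √(2/D) Σ_{j=1}^m (α_j + β_j). -/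
open Real Matrix Finset

/-!
After rotating back by `-ω_j ⬝ x`, the `j`-th block depends only on the phase `θ = ω_j ⬝ Δx`.
Writing `θ = (Aᵀ ω_j) ⬝ (A⁻¹ Δx)`, Hölder bounds `|θ|` by `γ ‖Aᵀ ω_j‖_q`, and then
`|cos θ - 1| ≤ min 2 (θ² / 2)` and `|sin θ| ≤ min 1 |θ|`.
-/

theorem abs_sum_mul_le_Lp_mul_Lq {ι : Type*} (s : Finset ι) (f g : ι → ℝ) {p q : ℝ}
    (hpq : p.HolderConjugate q) :
    |∑ i ∈ s, f i * g i| ≤ (∑ i ∈ s, |f i| ^ p) ^ (1 / p) * (∑ i ∈ s, |g i| ^ q) ^ (1 / q) :=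
  calc |∑ i ∈ s, f i * g i| ≤ ∑ i ∈ s, |f i| * |g i| := by
        simpa only [abs_mul] using abs_sum_le_sum_abs (fun i => f i * g i) s
    _ ≤ _ := by
        simpa only [abs_abs] using inner_le_Lp_mul_Lq s (fun i => |f i|) (fun i => |g i|) hpq

theorem Matrix.transpose_mulVec_dotProduct_nonsing_inv_mulVec {n R : Type*} [Fintype n]
    [DecidableEq n] [CommRing R] (A : Matrix n n R) (hA : IsUnit A.det) (u v : n → R) :
    (Aᵀ *ᵥ u) ⬝ᵥ (A⁻¹ *ᵥ v) = u ⬝ᵥ v := by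
  rw [mulVec_transpose, ← dotProduct_mulVec, mulVec_mulVec, mul_nonsing_inv A hA, one_mulVec]

theorem Real.abs_cos_sub_one_le_of_abs_le {θ c : ℝ} (h : |θ| ≤ c) :
    |cos θ - 1| ≤ min 2 (c ^ 2 / 2) := by
  have hsq : θ ^ 2 ≤ c ^ 2 := sq_le_sq' (abs_le.1 h).1 (abs_le.1 h).2
  rw [abs_sub_comm, abs_of_nonneg (sub_nonneg.2 (cos_le_one θ))]
  refine le_min (by linarith [neg_one_le_cos θ]) ?_
  linarith [one_sub_sq_div_two_le_cos (x := θ)]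

theorem Real.abs_sin_le_of_abs_le {θ c : ℝ} (h : |θ| ≤ c) : |sin θ| ≤ min 1 c :=
  le_min (abs_sin_le_one θ) (abs_sin_le_abs.trans h)

theorem stmt_5_general (n m : ℕ)
    (p q : ℝ) (hq : 1 < q) (hpq : 1 / p + 1 / q = 1)
    (A : Matrix (Fin n) (Fin n) ℝ) (hA : IsUnit A.det)
    (γ : ℝ)
    (ω : Fin m → Fin n → ℝ) (Δx : Fin n → ℝ)
    (h : (∑ k, |(A⁻¹ *ᵥ Δx) k| ^ p) ^ (1 / p) ≤ γ)
    (D : ℕ)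
    (w : Fin m × Fin 2 → ℝ)
    (hw : ∀ j : Fin m,
      w (j, 0) = Real.sqrt (2 / D) * (Real.cos (∑ k, ω j k * Δx k) - 1) ∧
      w (j, 1) = Real.sqrt (2 / D) * Real.sin (∑ k, ω j k * Δx k))
    (α β : Fin m → ℝ)
    (hα : ∀ j, α j = min 2 ((γ * (∑ k, |(Aᵀ *ᵥ ω j) k| ^ q) ^ (1 / q)) ^ 2 / 2))
    (hβ : ∀ j, β j = min 1 (γ * (∑ k, |(Aᵀ *ᵥ ω j) k| ^ q) ^ (1 / q))) :
    ∑ i : Fin m × Fin 2, |w i|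
      ≤ Real.sqrt (2 / D) * ∑ j : Fin m, (α j + β j) := by
  have hqp : q.HolderConjugate p :=
    Real.holderConjugate_iff.2 ⟨hq, by simpa only [one_div, add_comm] using hpq⟩
  have hphase (j : Fin m) :
      |∑ k, ω j k * Δx k| ≤ γ * (∑ k, |(Aᵀ *ᵥ ω j) k| ^ q) ^ (1 / q) :=
    calc |∑ k, ω j k * Δx k| = |∑ k, (Aᵀ *ᵥ ω j) k * (A⁻¹ *ᵥ Δx) k| := by
          rw [← dotProduct, ← dotProduct, transpose_mulVec_dotProduct_nonsing_inv_mulVec A hA]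
      _ ≤ (∑ k, |(Aᵀ *ᵥ ω j) k| ^ q) ^ (1 / q) * (∑ k, |(A⁻¹ *ᵥ Δx) k| ^ p) ^ (1 / p) :=
          abs_sum_mul_le_Lp_mul_Lq _ _ _ hqp
      _ ≤ _ := by rw [mul_comm γ]; gcongr
  rw [Fintype.sum_prod_type, mul_sum]
  refine sum_le_sum fun j _ => ?_
  rw [Fin.sum_univ_two, (hw j).1, (hw j).2, abs_mul, abs_mul, abs_of_nonneg (sqrt_nonneg _),
    mul_add, hα, hβ]
  gcongr
  exacts [abs_cos_sub_one_le_of_abs_le (hphase j), abs_sin_le_of_abs_le (hphase j)]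

/-- Case `p̄ = 1` of Proposition 1: the `ℓ¹` norm of the rotated
random-Fourier-feature uncertainty is bounded by `√(2/D) Σ_j (α_j + β_j)`. -/
theorem stmt_5 (n m : ℕ) (hn : 1 ≤ n) (hm : 1 ≤ m)
    (p q : ℝ) (hp : 1 < p) (hq : 1 < q) (hpq : 1 / p + 1 / q = 1)
    (A : Matrix (Fin n) (Fin n) ℝ) (hA : IsUnit A.det)
    (γ : ℝ) (hγ : 0 ≤ γ)
    (ω : Fin m → Fin n → ℝ) (x Δx : Fin n → ℝ)
    (h : (∑ k, |(A⁻¹ *ᵥ Δx) k| ^ p) ^ (1 / p) ≤ γ)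
    (D : ℕ) (hD : D = 2 * m)
    (w : Fin m × Fin 2 → ℝ)
    (hw : ∀ j : Fin m,
      w (j, 0) = Real.sqrt (2 / D) * (Real.cos (∑ k, ω j k * Δx k) - 1) ∧
      w (j, 1) = Real.sqrt (2 / D) * Real.sin (∑ k, ω j k * Δx k))
    (α β : Fin m → ℝ)
    (hα : ∀ j, α j = min 2 ((γ * (∑ k, |(Aᵀ *ᵥ ω j) k| ^ q) ^ (1 / q)) ^ 2 / 2))
    (hβ : ∀ j, β j = min 1 (γ * (∑ k, |(Aᵀ *ᵥ ω j) k| ^ q) ^ (1 / q))) :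
    ∑ i : Fin m × Fin 2, |w i|
      ≤ Real.sqrt (2 / D) * ∑ j : Fin m, (α j + β j) :=
  stmt_5_general n m p q hq hpq A hA γ ω Δx h D w hw α β hα hβ
end

section
/- Let n ≥ 1, m ≥ 1, r ≥ 1, σ > 0, γ ≥ 0, let A be an invertible n×n real matrix, let x̂_1, …, x̂_m ∈ ℝⁿ be landmark points, let u_1, …, u_r ∈ ℝ^m be vectors each of Euclidean norm at most 1, and let x, Δ ∈ ℝⁿ with ‖A⁻¹ Δ‖₂ ≤ γ. Define k̂(y) ∈ ℝ^m by k̂(y)_j = exp(−‖y−x̂_j‖₂²/(2σ²)), and define v ∈ ℝ^r by v_l = u_l ⋅ (k̂(x+Δ) − k̂(x)). Set k_j = exp(−‖x−x̂_j‖₂²/(2σ²)), τ_j = exp(−2γ‖A^⊤(x−x̂_j)‖₂/(2σ²)), ρ = exp(−γ²‖A‖²/(2σ²)). Then ‖v‖₂ ≤ √( r ( Σ_{j=1}^m k_j² (1/τ_j² + 1) − 2 ρ Σ_{j=1}^m k_j² τ_j ) ). -/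
/-!
The landmark kernel values move multiplicatively under the perturbation: expanding
`‖x + Δ - x̂_j‖² = ‖x - x̂_j‖² + 2⟪Δ, x - x̂_j⟫ + ‖Δ‖²` and writing `Δ = A (A⁻¹ Δ)`,
the cross term is at most `γ ‖Aᵀ (x - x̂_j)‖` and `‖Δ‖² ≤ γ² ‖A‖²`, so
`ρ τ_j k_j ≤ k̂(x + Δ)_j ≤ k_j / τ_j`. Expanding the square of the difference then bounds
`(k̂(x + Δ)_j - k_j)²` termwise, and Cauchy–Schwarz with `‖u_l‖ ≤ 1` bounds each `v_l²`
by `‖k̂(x + Δ) - k̂(x)‖²`.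
-/

open Real Matrix Finset

section EuclideanBounds

variable {ι : Type*} [Fintype ι]

lemma sqrt_sum_sq_mulVec_le [DecidableEq ι] (B : Matrix ι ι ℝ) (w : ι → ℝ) :
    √(∑ k, (B *ᵥ w) k ^ 2) ≤ ‖toEuclideanCLM (𝕜 := ℝ) B‖ * √(∑ k, w k ^ 2) := by
  have hnorm : ∀ y : ι → ℝ, ‖WithLp.toLp 2 y‖ = √(∑ k, y k ^ 2) := fun y => by
    simp [EuclideanSpace.norm_eq]
  simpa only [toEuclideanCLM_toLp, hnorm] using
    (toEuclideanCLM (𝕜 := ℝ) B).le_opNorm (WithLp.toLp 2 w)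

lemma sum_sq_add_sub (x Δ z : ι → ℝ) :
    ∑ k, ((x + Δ) k - z k) ^ 2 = ∑ k, (x k - z k) ^ 2 + 2 * (Δ ⬝ᵥ (x - z)) + ∑ k, Δ k ^ 2 := by
  simp only [dotProduct, mul_sum, ← sum_add_distrib]
  exact sum_congr rfl fun k _ => by simp only [Pi.add_apply, Pi.sub_apply]; ring

variable [DecidableEq ι] {A : Matrix ι ι ℝ} {Δ : ι → ℝ} {γ : ℝ}

lemma sum_sq_le_of_sqrt_sum_sq_inv_mulVec_le (hA : IsUnit A.det)
    (h : √(∑ k, (A⁻¹ *ᵥ Δ) k ^ 2) ≤ γ) :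
    ∑ k, Δ k ^ 2 ≤ γ ^ 2 * ‖toEuclideanCLM (𝕜 := ℝ) A‖ ^ 2 := by
  have hnorm : √(∑ k, Δ k ^ 2) ≤ ‖toEuclideanCLM (𝕜 := ℝ) A‖ * γ := by
    calc √(∑ k, Δ k ^ 2) = √(∑ k, (A *ᵥ (A⁻¹ *ᵥ Δ)) k ^ 2) := by
          rw [mulVec_mulVec, mul_nonsing_inv A hA, one_mulVec]
      _ ≤ _ := sqrt_sum_sq_mulVec_le A _
      _ ≤ _ := mul_le_mul_of_nonneg_left h (norm_nonneg _)
  have hsq := pow_le_pow_left₀ (sqrt_nonneg _) hnorm 2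
  rwa [sq_sqrt (by positivity), mul_pow, mul_comm] at hsq

lemma abs_dotProduct_le_of_sqrt_sum_sq_inv_mulVec_le (hA : IsUnit A.det)
    (h : √(∑ k, (A⁻¹ *ᵥ Δ) k ^ 2) ≤ γ) (w : ι → ℝ) :
    |Δ ⬝ᵥ w| ≤ γ * √(∑ k, (Aᵀ *ᵥ w) k ^ 2) := by
  have hdot : Δ ⬝ᵥ w = (A⁻¹ *ᵥ Δ) ⬝ᵥ (Aᵀ *ᵥ w) := by
    rw [dotProduct_mulVec, vecMul_transpose, mulVec_mulVec, mul_nonsing_inv A hA, one_mulVec]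
  calc |Δ ⬝ᵥ w| ≤ √(∑ k, (A⁻¹ *ᵥ Δ) k ^ 2) * √(∑ k, (Aᵀ *ᵥ w) k ^ 2) := by
        rw [hdot, ← sqrt_sq_eq_abs, ← sqrt_mul (by positivity)]
        exact sqrt_le_sqrt (sum_mul_sq_le_sq_mul_sq _ _ _)
    _ ≤ _ := mul_le_mul_of_nonneg_right h (sqrt_nonneg _)

end EuclideanBounds

section GaussianPerturbation

variable {s b c e g E : ℝ}

lemma exp_neg_add_div_le (hs : 0 ≤ s) (hc : |c| ≤ g) (he : 0 ≤ e) :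
    exp (-(b + 2 * c + e) / s) ≤ exp (-b / s) / exp (-(2 * g) / s) := by
  rw [← exp_sub, div_sub_div_same, exp_le_exp]
  refine div_le_div_of_nonneg_right ?_ hs
  linarith [neg_abs_le c]

lemma exp_mul_exp_mul_exp_le (hs : 0 ≤ s) (hc : |c| ≤ g) (he : e ≤ E) :
    exp (-E / s) * exp (-(2 * g) / s) * exp (-b / s) ≤ exp (-(b + 2 * c + e) / s) := by
  rw [← exp_add, ← exp_add, ← add_div, ← add_div, exp_le_exp]
  refine div_le_div_of_nonneg_right ?_ hs
  linarith [le_abs_self c]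

lemma sq_sub_le_of_le_div_of_mul_le {k₀ k₁ τ ρ : ℝ} (hk₀ : 0 ≤ k₀) (hk₁ : 0 ≤ k₁)
    (hupper : k₁ ≤ k₀ / τ) (hlower : ρ * τ * k₀ ≤ k₁) :
    (k₁ - k₀) ^ 2 ≤ k₀ ^ 2 * (1 / τ ^ 2 + 1) - 2 * ρ * (k₀ ^ 2 * τ) := by
  have hsq : k₁ ^ 2 ≤ k₀ ^ 2 / τ ^ 2 := by
    rw [← div_pow]; exact pow_le_pow_left₀ hk₁ hupper 2
  have hcross : ρ * τ * k₀ * k₀ ≤ k₁ * k₀ := mul_le_mul_of_nonneg_right hlower hk₀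
  calc (k₁ - k₀) ^ 2 = k₁ ^ 2 + k₀ ^ 2 - 2 * (k₁ * k₀) := by ring
    _ ≤ k₀ ^ 2 / τ ^ 2 + k₀ ^ 2 - 2 * (ρ * τ * k₀ * k₀) := by linarith
    _ = _ := by ring

lemma sq_exp_perturb_sub_le {ι : Type*} [Fintype ι] (hs : 0 ≤ s) {x Δ z : ι → ℝ}
    (hΔ : ∑ k, Δ k ^ 2 ≤ E) (hcross : |Δ ⬝ᵥ (x - z)| ≤ g) :
    (exp (-(∑ k, ((x + Δ) k - z k) ^ 2) / s) - exp (-(∑ k, (x k - z k) ^ 2) / s)) ^ 2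
      ≤ exp (-(∑ k, (x k - z k) ^ 2) / s) ^ 2 * (1 / exp (-(2 * g) / s) ^ 2 + 1)
        - 2 * exp (-E / s) * (exp (-(∑ k, (x k - z k) ^ 2) / s) ^ 2 * exp (-(2 * g) / s)) := by
  rw [sum_sq_add_sub]
  exact sq_sub_le_of_le_div_of_mul_le (exp_pos _).le (exp_pos _).le
    (exp_neg_add_div_le hs hcross (by positivity)) (exp_mul_exp_mul_exp_le hs hcross hΔ)

end GaussianPerturbation

lemma sum_sq_sum_mul_le {κ ι : Type*} [Fintype κ] [Fintype ι] (u : κ → ι → ℝ)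
    (hu : ∀ l, √(∑ j, u l j ^ 2) ≤ 1) (d : ι → ℝ) :
    ∑ l, (∑ j, u l j * d j) ^ 2 ≤ Fintype.card κ * ∑ j, d j ^ 2 := by
  have hterm : ∀ l, (∑ j, u l j * d j) ^ 2 ≤ ∑ j, d j ^ 2 := fun l => by
    have hu2 : ∑ j, u l j ^ 2 ≤ 1 := by
      simpa [sqrt_le_one] using hu l
    exact (sum_mul_sq_le_sq_mul_sq _ _ _).trans (mul_le_of_le_one_left (by positivity) hu2)
  simpa [sum_const, nsmul_eq_mul] using sum_le_sum fun l (_ : l ∈ univ) => hterm l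

theorem stmt_12_general (n m r : ℕ)
    (σ : ℝ) (γ : ℝ)
    (A : Matrix (Fin n) (Fin n) ℝ) (hA : IsUnit A.det)
    (xhat : Fin m → Fin n → ℝ)
    (u : Fin r → Fin m → ℝ)
    (hu : ∀ l, Real.sqrt (∑ j, (u l j) ^ 2) ≤ 1)
    (x Δ : Fin n → ℝ)
    (h : Real.sqrt (∑ k, ((A⁻¹ *ᵥ Δ) k) ^ 2) ≤ γ)
    (khat : (Fin n → ℝ) → Fin m → ℝ)
    (hkhat : ∀ y j, khat y j = Real.exp (-(∑ k, (y k - xhat j k) ^ 2) / (2 * σ ^ 2)))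
    (v : Fin r → ℝ)
    (hv : ∀ l, v l = ∑ j, u l j * (khat (x + Δ) j - khat x j))
    (K τ : Fin m → ℝ) (ρ : ℝ)
    (hK : ∀ j, K j = Real.exp (-(∑ k, (x k - xhat j k) ^ 2) / (2 * σ ^ 2)))
    (hτ : ∀ j, τ j =
      Real.exp (-(2 * γ * Real.sqrt (∑ k, ((Aᵀ *ᵥ (x - xhat j)) k) ^ 2)) / (2 * σ ^ 2)))
    (hρ : ρ = Real.exp (-(γ ^ 2 * ‖Matrix.toEuclideanCLM (𝕜 := ℝ) A‖ ^ 2) / (2 * σ ^ 2))) :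
    Real.sqrt (∑ l, (v l) ^ 2)
      ≤ Real.sqrt (r * (∑ j, (K j) ^ 2 * (1 / (τ j) ^ 2 + 1)
          - 2 * ρ * ∑ j, (K j) ^ 2 * τ j)) := by
  have hdiff : ∀ j, (khat (x + Δ) j - khat x j) ^ 2
      ≤ K j ^ 2 * (1 / τ j ^ 2 + 1) - 2 * ρ * (K j ^ 2 * τ j) := fun j => by
    rw [hkhat, hkhat, hK, hτ, mul_assoc, hρ]
    exact sq_exp_perturb_sub_le (by positivity) (sum_sq_le_of_sqrt_sum_sq_inv_mulVec_le hA h)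
      (abs_dotProduct_le_of_sqrt_sum_sq_inv_mulVec_le hA h _)
  refine sqrt_le_sqrt ?_
  calc ∑ l, v l ^ 2 = ∑ l, (∑ j, u l j * (khat (x + Δ) j - khat x j)) ^ 2 := by simp only [hv]
    _ ≤ r * ∑ j, (khat (x + Δ) j - khat x j) ^ 2 := by
      simpa using sum_sq_sum_mul_le u hu _
    _ ≤ r * (∑ j, K j ^ 2 * (1 / τ j ^ 2 + 1) - 2 * ρ * ∑ j, K j ^ 2 * τ j) := by
      gcongr
      calc ∑ j, (khat (x + Δ) j - khat x j) ^ 2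
          ≤ ∑ j, (K j ^ 2 * (1 / τ j ^ 2 + 1) - 2 * ρ * (K j ^ 2 * τ j)) :=
            sum_le_sum fun j _ => hdiff j
        _ = _ := by rw [sum_sub_distrib, mul_sum]

/-- Proposition 2 of the paper: Nyström bounding scheme. With Gaussian kernel
vector `khat(y)_j = exp(−‖y−xhat_j‖²/(2σ²))`, orthonormal-type vectors `u_l` of
norm at most one, and `v_l = u_l ⋅ (khat(x+Δ) − khat(x))`, the Euclidean norm of `v`
is bounded by `√(r(Σ_j k_j²(1/τ_j² + 1) − 2ρ Σ_j k_j² τ_j))`. -/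
theorem stmt_12 (n m r : ℕ) (hn : 1 ≤ n) (hm : 1 ≤ m) (hr : 1 ≤ r)
    (σ : ℝ) (hσ : 0 < σ) (γ : ℝ) (hγ : 0 ≤ γ)
    (A : Matrix (Fin n) (Fin n) ℝ) (hA : IsUnit A.det)
    (xhat : Fin m → Fin n → ℝ)
    (u : Fin r → Fin m → ℝ)
    (hu : ∀ l, Real.sqrt (∑ j, (u l j) ^ 2) ≤ 1)
    (x Δ : Fin n → ℝ)
    (h : Real.sqrt (∑ k, ((A⁻¹ *ᵥ Δ) k) ^ 2) ≤ γ)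
    (khat : (Fin n → ℝ) → Fin m → ℝ)
    (hkhat : ∀ y j, khat y j = Real.exp (-(∑ k, (y k - xhat j k) ^ 2) / (2 * σ ^ 2)))
    (v : Fin r → ℝ)
    (hv : ∀ l, v l = ∑ j, u l j * (khat (x + Δ) j - khat x j))
    (K τ : Fin m → ℝ) (ρ : ℝ)
    (hK : ∀ j, K j = Real.exp (-(∑ k, (x k - xhat j k) ^ 2) / (2 * σ ^ 2)))
    (hτ : ∀ j, τ j =
      Real.exp (-(2 * γ * Real.sqrt (∑ k, ((Aᵀ *ᵥ (x - xhat j)) k) ^ 2)) / (2 * σ ^ 2)))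
    (hρ : ρ = Real.exp (-(γ ^ 2 * ‖Matrix.toEuclideanCLM (𝕜 := ℝ) A‖ ^ 2) / (2 * σ ^ 2))) :
    Real.sqrt (∑ l, (v l) ^ 2)
      ≤ Real.sqrt (r * (∑ j, (K j) ^ 2 * (1 / (τ j) ^ 2 + 1)
          - 2 * ρ * ∑ j, (K j) ^ 2 * τ j)) :=
  stmt_12_general n m r σ γ A hA xhat u hu x Δ h khat hkhat v hv K τ ρ hK hτ hρ
end
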